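/- Let v be a classical solution of the transformed regularized Delta problem satisfying v_x(x,t) + 1/b ≥ 0 on [0,b]×[0,T]. Then there is a constant C = C(a,σ,r,q,b,T,K), independent of ε and of v, such that |v(x,t)| ≤ C for all (x,t) ∈ [0,b]×[0,T]. -/

import Mathlib

/-
Weak maximum principle. At an interior maximum (x₀, t₀) with t₀ > 0 we have v_x = 0 and v_t ≥ 0.
The flux φ = (a₁ + a₂ + ε) v_x vanishes at x₀, and the gradient condition v_x + 1/b ≥ 0 makes the
diffusion coefficient positive; so if φ'(x₀) > 0, then φ < 0 and hence v_x < 0 just left of x₀,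
contradicting maximality. Thus φ'(x₀) ≤ 0 and the equation gives q v ≤ f ≤ sup f. Symmetrically
q v ≥ f ≥ 0 at an interior minimum, while on the parabolic boundary |v| ≤ |v₀| ≤ 1. Hence
|v| ≤ max 1 (sup f / q), and sup f depends only on σ, a, r, q, b, T.
-/

open Real Set Filter

/-- The quintic Hermite interpolant on [K−ε, K+ε]. -/
noncomputable def H5 (K ε x : ℝ) : ℝ :=
  (1 / (8 * ε ^ 3)) * (x - K + ε) ^ 3
    - (3 / (16 * ε ^ 4)) * (x - K + ε) ^ 3 * (x - K - ε)
    + (3 / (16 * ε ^ 5)) * (x - K + ε) ^ 3 * (x - K - ε) ^ 2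

/-- The regularized initial datum v₀ of the transformed problem. -/
noncomputable def v0reg (K b ε x : ℝ) : ℝ :=
  if x < K - ε then -x / b
  else if x ≤ K + ε then H5 K ε x - x / b
  else 1 - x / b

/-- a₁(x,t,p) = 0.5x²σ²(1 + e^{rt}a²x²(p + 1/b)). -/
noncomputable def coefA1 (σ a r b x t p : ℝ) : ℝ :=
  0.5 * x ^ 2 * σ ^ 2 * (1 + Real.exp (r * t) * a ^ 2 * x ^ 2 * (p + 1 / b))

/-- a₂(x,t) = 0.5σ²e^{rt}a²x⁴/b. -/
noncomputable def coefA2 (σ a r b x t : ℝ) : ℝ :=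
  0.5 * σ ^ 2 * Real.exp (r * t) * a ^ 2 * x ^ 4 / b

/-- f(x,t) = (σ² + r + 2q)x/b + 2x³σ²e^{rt}a²/b². -/
noncomputable def srcF (σ a r q b x t : ℝ) : ℝ :=
  (σ ^ 2 + r + 2 * q) * x / b + 2 * x ^ 3 * σ ^ 2 * Real.exp (r * t) * a ^ 2 / b ^ 2

/-- A classical solution of the transformed regularized Delta problem:
v, v_x, v_xx, v_t continuous on [0,b]×[0,T], the divergence-form PDE holds on
(0,b)×(0,T], homogeneous Dirichlet boundary conditions, initial datum v₀. -/
def IsClassicalSolutionV (σ a r q T K b ε : ℝ) (v : ℝ → ℝ → ℝ) : Prop :=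
  ContinuousOn (fun p : ℝ × ℝ => v p.1 p.2) (Icc 0 b ×ˢ Icc 0 T) ∧
  ContinuousOn (fun p : ℝ × ℝ => deriv (fun y => v y p.2) p.1) (Icc 0 b ×ˢ Icc 0 T) ∧
  ContinuousOn (fun p : ℝ × ℝ => deriv (deriv (fun y => v y p.2)) p.1) (Icc 0 b ×ˢ Icc 0 T) ∧
  ContinuousOn (fun p : ℝ × ℝ => deriv (fun s => v p.1 s) p.2) (Icc 0 b ×ˢ Icc 0 T) ∧
  (∀ x ∈ Ioo (0:ℝ) b, ∀ t ∈ Ioc (0:ℝ) T,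
    deriv (fun s => v x s) t =
      deriv (fun y =>
        (coefA1 σ a r b y t (deriv (fun z => v z t) y) + coefA2 σ a r b y t + ε)
          * deriv (fun z => v z t) y) x
      + (r - q) * x * deriv (fun z => v z t) x - q * v x t + srcF σ a r q b x t) ∧
  (∀ t ∈ Icc (0:ℝ) T, v 0 t = 0 ∧ v b t = 0) ∧
  (∀ x ∈ Icc (0:ℝ) b, v x 0 = v0reg K b ε x)

open Topology

lemma H5_mem_Icc {K ε x : ℝ} (hε : 0 < ε) (h1 : K - ε ≤ x) (h2 : x ≤ K + ε) :
    H5 K ε x ∈ Icc (0:ℝ) 1 := by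
  set w := x - K + ε
  have hw0 : 0 ≤ w := by linarith
  have hw2 : w ≤ 2 * ε := by linarith
  have hH5 : H5 K ε x = w ^ 3 * (3 * w ^ 2 - 15 * ε * w + 20 * ε ^ 2) / (16 * ε ^ 5) := by
    unfold H5
    field_simp
    ring
  have hquad : 0 < 3 * w ^ 2 - 15 * ε * w + 20 * ε ^ 2 := by
    nlinarith [sq_nonneg (2 * w - 5 * ε)]
  rw [hH5]
  refine ⟨by positivity, (div_le_one (by positivity)).2 ?_⟩
  have hfactor : 16 * ε ^ 5 - w ^ 3 * (3 * w ^ 2 - 15 * ε * w + 20 * ε ^ 2)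
      = (2 * ε - w) ^ 3 * (3 * w ^ 2 + 3 * ε * w + 2 * ε ^ 2) := by ring
  have hcube : 0 ≤ (2 * ε - w) ^ 3 := pow_nonneg (by linarith) 3
  have hquad' : 0 ≤ 3 * w ^ 2 + 3 * ε * w + 2 * ε ^ 2 := by positivity
  linarith [mul_nonneg hcube hquad']

lemma abs_v0reg_le_one {K b ε x : ℝ} (hb : 0 < b) (hε : 0 < ε) (hx : x ∈ Icc 0 b) :
    |v0reg K b ε x| ≤ 1 := by
  have h0 : 0 ≤ x / b := div_nonneg hx.1 hb.le
  have h1 : x / b ≤ 1 := (div_le_one hb).2 hx.2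
  rw [abs_le]
  unfold v0reg
  split_ifs with hlt hle
  · constructor <;> linarith [neg_div b x]
  · obtain ⟨hH0, hH1⟩ := H5_mem_Icc hε (not_lt.1 hlt) hle
    constructor <;> linarith
  · constructor <;> linarith

lemma coefA1_add_coefA2_add_pos {σ a r b x t p ε : ℝ} (hb : 0 ≤ b) (hε : 0 < ε)
    (hp : 0 ≤ p + 1 / b) : 0 < coefA1 σ a r b x t p + coefA2 σ a r b x t + ε := by
  have h1 : 0 ≤ coefA1 σ a r b x t p := by unfold coefA1; positivity
  have h2 : 0 ≤ coefA2 σ a r b x t := by unfold coefA2; positivity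
  linarith

lemma srcF_nonneg {σ a r q b x : ℝ} (t : ℝ) (hr : 0 ≤ r) (hq : 0 ≤ q) (hb : 0 ≤ b)
    (hx : 0 ≤ x) : 0 ≤ srcF σ a r q b x t := by
  unfold srcF
  positivity

noncomputable def srcBound (σ a r q T b : ℝ) : ℝ :=
  σ ^ 2 + r + 2 * q + 2 * b * σ ^ 2 * a ^ 2 * exp (r * T)

lemma srcF_le_srcBound {σ a r q T b x t : ℝ} (hr : 0 ≤ r) (hq : 0 ≤ q) (hb : 0 < b)
    (hx : x ∈ Icc 0 b) (ht : t ≤ T) : srcF σ a r q b x t ≤ srcBound σ a r q T b := by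
  have hlin : (σ ^ 2 + r + 2 * q) * x / b ≤ σ ^ 2 + r + 2 * q := by
    rw [div_le_iff₀ hb]
    exact mul_le_mul_of_nonneg_left hx.2 (by positivity)
  have hcubic : 2 * x ^ 3 * σ ^ 2 * exp (r * t) * a ^ 2 / b ^ 2
      ≤ 2 * b * σ ^ 2 * a ^ 2 * exp (r * T) := by
    rw [div_le_iff₀ (by positivity)]
    have hx3 : x ^ 3 ≤ b ^ 3 := pow_le_pow_left₀ hx.1 hx.2 3
    have hexp : exp (r * t) ≤ exp (r * T) := exp_le_exp.2 (mul_le_mul_of_nonneg_left ht hr)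
    calc 2 * x ^ 3 * σ ^ 2 * exp (r * t) * a ^ 2 ≤ 2 * b ^ 3 * σ ^ 2 * exp (r * T) * a ^ 2 := by
          gcongr
      _ = 2 * b * σ ^ 2 * a ^ 2 * exp (r * T) * b ^ 2 := by ring
  unfold srcF srcBound
  linarith

lemma deriv_nonneg_of_eventually_le_nhdsLT {f : ℝ → ℝ} {t₀ : ℝ}
    (h : ∀ᶠ s in 𝓝[<] t₀, f s ≤ f t₀) : 0 ≤ deriv f t₀ := by
  by_cases hd : DifferentiableAt ℝ f t₀
  · refine ge_of_tendsto
      ((hasDerivAt_iff_tendsto_slope.1 hd.hasDerivAt).mono_left (nhdsLT_le_nhdsNE t₀)) ?_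
    filter_upwards [h, self_mem_nhdsWithin] with s hs (hst : s < t₀)
    rw [slope_def_field]
    exact div_nonneg_of_nonpos (sub_nonpos.2 hs) (sub_nonpos.2 hst.le)
  · rw [deriv_zero_of_not_differentiableAt hd]

lemma deriv_nonpos_of_eventually_ge_nhdsLT {f : ℝ → ℝ} {t₀ : ℝ}
    (h : ∀ᶠ s in 𝓝[<] t₀, f t₀ ≤ f s) : deriv f t₀ ≤ 0 := by
  have hneg := deriv_nonneg_of_eventually_le_nhdsLT (f := -f) (h.mono fun _ hs => neg_le_neg hs)
  rw [deriv.neg] at hneg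
  linarith

lemma IsLocalMax.frequently_deriv_nonneg_nhdsLT {g : ℝ → ℝ} {x₀ : ℝ} (hmax : IsLocalMax g x₀)
    (hg : ContinuousAt g x₀) : ∃ᶠ y in 𝓝[<] x₀, 0 ≤ deriv g y := by
  intro hneg
  obtain ⟨l, hl, hsub⟩ :=
    mem_nhdsLT_iff_exists_Ioo_subset.1 (hneg.and (nhdsWithin_le_nhds hmax))
  have hξ : (l + x₀) / 2 ∈ Ioo l x₀ := ⟨by linarith [mem_Iio.1 hl], by linarith [mem_Iio.1 hl]⟩
  have hanti : StrictAntiOn g (Icc ((l + x₀) / 2) x₀) := by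
    refine strictAntiOn_of_deriv_neg (convex_Icc _ _) (fun y hy => ?_) (fun y hy => ?_)
    · rcases hy.2.eq_or_lt with rfl | hyx
      · exact hg.continuousWithinAt
      · have hy' := (hsub ⟨hξ.1.trans_le hy.1, hyx⟩).1
        exact (differentiableAt_of_deriv_ne_zero (by linarith [not_le.1 hy'])).continuousAt
          |>.continuousWithinAt
    · rw [interior_Icc] at hy
      exact not_le.1 (hsub ⟨hξ.1.trans hy.1, hy.2⟩).1
  exact (hanti ⟨le_rfl, hξ.2.le⟩ ⟨hξ.2.le, le_rfl⟩ hξ.2).not_ge (hsub hξ).2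

lemma IsLocalMax.deriv_mul_deriv_nonpos {g c : ℝ → ℝ} {x₀ : ℝ} (hmax : IsLocalMax g x₀)
    (hg : ContinuousAt g x₀) (hc : ∀ᶠ y in 𝓝[<] x₀, 0 < c y) :
    deriv (fun y => c y * deriv g y) x₀ ≤ 0 := by
  by_contra! hpos
  have hslope := (hasDerivAt_iff_tendsto_slope.1
    (differentiableAt_of_deriv_ne_zero hpos.ne').hasDerivAt).mono_left (nhdsLT_le_nhdsNE x₀)
  have hzero : c x₀ * deriv g x₀ = 0 := by rw [hmax.deriv_eq_zero, mul_zero]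
  have hdecr : ∀ᶠ y in 𝓝[<] x₀, deriv g y < 0 := by
    filter_upwards [hslope.eventually (eventually_gt_nhds hpos), hc, self_mem_nhdsWithin]
      with y hy hcy (hyx : y < x₀)
    exact neg_of_mul_neg_right
      (neg_of_slope_pos (f := fun y => c y * deriv g y) hyx hy hzero) hcy.le
  obtain ⟨y, hy, hy'⟩ := ((hmax.frequently_deriv_nonneg_nhdsLT hg).and_eventually hdecr).exists
  linarith

lemma IsLocalMin.deriv_mul_deriv_nonneg {g c : ℝ → ℝ} {x₀ : ℝ} (hmin : IsLocalMin g x₀)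
    (hg : ContinuousAt g x₀) (hc : ∀ᶠ y in 𝓝[<] x₀, 0 < c y) :
    0 ≤ deriv (fun y => c y * deriv g y) x₀ := by
  have h := IsLocalMax.deriv_mul_deriv_nonpos (g := -g) hmin.neg hg.neg hc
  have hflux : (fun y => c y * deriv (-g) y) = -fun y => c y * deriv g y := by
    funext y
    rw [deriv.neg, mul_neg, Pi.neg_apply]
  rw [hflux, deriv.neg] at h
  linarith

namespace IsClassicalSolutionV

variable {σ a r q T K b ε : ℝ} {v : ℝ → ℝ → ℝ}

lemma continuousOn_slice (hsol : IsClassicalSolutionV σ a r q T K b ε v) {t : ℝ}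
    (ht : t ∈ Icc 0 T) : ContinuousOn (fun y => v y t) (Icc 0 b) :=
  hsol.1.comp (continuous_id.prodMk continuous_const).continuousOn fun _ hy => ⟨hy, ht⟩

lemma mul_le_srcF_of_isMaxOn (hsol : IsClassicalSolutionV σ a r q T K b ε v) (hb : 0 ≤ b)
    (hε : 0 < ε) (hgrad : ∀ x ∈ Icc 0 b, ∀ t ∈ Icc 0 T, 0 ≤ deriv (fun z => v z t) x + 1 / b)
    {x₀ t₀ : ℝ} (hx₀ : x₀ ∈ Ioo 0 b) (ht₀ : t₀ ∈ Ioc 0 T)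
    (hmax : IsMaxOn (fun p : ℝ × ℝ => v p.1 p.2) (Icc 0 b ×ˢ Icc 0 T) (x₀, t₀)) :
    q * v x₀ t₀ ≤ srcF σ a r q b x₀ t₀ := by
  have ht₀' : t₀ ∈ Icc 0 T := Ioc_subset_Icc_self ht₀
  have hnhds : Icc 0 b ∈ 𝓝 x₀ := Icc_mem_nhds hx₀.1 hx₀.2
  have hmax_x : IsLocalMax (fun y => v y t₀) x₀ :=
    mem_of_superset hnhds fun y hy => hmax (mk_mem_prod hy ht₀')
  have hvt : 0 ≤ deriv (fun s => v x₀ s) t₀ :=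
    deriv_nonneg_of_eventually_le_nhdsLT <| mem_of_superset (Ioo_mem_nhdsLT ht₀.1)
      fun s hs => hmax (mk_mem_prod (Ioo_subset_Icc_self hx₀) ⟨hs.1.le, hs.2.le.trans ht₀.2⟩)
  have hflux := hmax_x.deriv_mul_deriv_nonpos
    ((hsol.continuousOn_slice ht₀').continuousAt hnhds)
    (c := fun y => coefA1 σ a r b y t₀ (deriv (fun z => v z t₀) y) + coefA2 σ a r b y t₀ + ε)
    (mem_of_superset (Ioo_mem_nhdsLT hx₀.1) fun y hy => coefA1_add_coefA2_add_pos hb hε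
      (hgrad y ⟨hy.1.le, hy.2.le.trans hx₀.2.le⟩ t₀ ht₀'))
  have hpde := hsol.2.2.2.2.1 x₀ hx₀ t₀ ht₀
  rw [hmax_x.deriv_eq_zero] at hpde
  linarith

lemma srcF_le_mul_of_isMinOn (hsol : IsClassicalSolutionV σ a r q T K b ε v) (hb : 0 ≤ b)
    (hε : 0 < ε) (hgrad : ∀ x ∈ Icc 0 b, ∀ t ∈ Icc 0 T, 0 ≤ deriv (fun z => v z t) x + 1 / b)
    {x₀ t₀ : ℝ} (hx₀ : x₀ ∈ Ioo 0 b) (ht₀ : t₀ ∈ Ioc 0 T)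
    (hmin : IsMinOn (fun p : ℝ × ℝ => v p.1 p.2) (Icc 0 b ×ˢ Icc 0 T) (x₀, t₀)) :
    srcF σ a r q b x₀ t₀ ≤ q * v x₀ t₀ := by
  have ht₀' : t₀ ∈ Icc 0 T := Ioc_subset_Icc_self ht₀
  have hnhds : Icc 0 b ∈ 𝓝 x₀ := Icc_mem_nhds hx₀.1 hx₀.2
  have hmin_x : IsLocalMin (fun y => v y t₀) x₀ :=
    mem_of_superset hnhds fun y hy => hmin (mk_mem_prod hy ht₀')
  have hvt : deriv (fun s => v x₀ s) t₀ ≤ 0 :=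
    deriv_nonpos_of_eventually_ge_nhdsLT <| mem_of_superset (Ioo_mem_nhdsLT ht₀.1)
      fun s hs => hmin (mk_mem_prod (Ioo_subset_Icc_self hx₀) ⟨hs.1.le, hs.2.le.trans ht₀.2⟩)
  have hflux := hmin_x.deriv_mul_deriv_nonneg
    ((hsol.continuousOn_slice ht₀').continuousAt hnhds)
    (c := fun y => coefA1 σ a r b y t₀ (deriv (fun z => v z t₀) y) + coefA2 σ a r b y t₀ + ε)
    (mem_of_superset (Ioo_mem_nhdsLT hx₀.1) fun y hy => coefA1_add_coefA2_add_pos hb hε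
      (hgrad y ⟨hy.1.le, hy.2.le.trans hx₀.2.le⟩ t₀ ht₀'))
  have hpde := hsol.2.2.2.2.1 x₀ hx₀ t₀ ht₀
  rw [hmin_x.deriv_eq_zero] at hpde
  linarith

lemma abs_le_one_of_not_interior (hsol : IsClassicalSolutionV σ a r q T K b ε v) (hb : 0 < b)
    (hε : 0 < ε) {x t : ℝ} (hx : x ∈ Icc 0 b) (ht : t ∈ Icc 0 T)
    (hbdry : ¬(x ∈ Ioo 0 b ∧ t ∈ Ioc 0 T)) : |v x t| ≤ 1 := by
  obtain ⟨-, -, -, -, -, hbc, hic⟩ := hsol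
  rcases ht.1.eq_or_lt with rfl | ht0
  · rw [hic x hx]
    exact abs_v0reg_le_one hb hε hx
  rcases hx.1.eq_or_lt with rfl | hx0
  · simp [(hbc t ht).1]
  rcases hx.2.eq_or_lt with rfl | hxb
  · simp [(hbc t ht).2]
  exact absurd ⟨⟨hx0, hxb⟩, ht0, ht.2⟩ hbdry

lemma le_max_of_isMaxOn (hsol : IsClassicalSolutionV σ a r q T K b ε v) (hr : 0 ≤ r)
    (hq : 0 < q) (hb : 0 < b) (hε : 0 < ε)
    (hgrad : ∀ x ∈ Icc 0 b, ∀ t ∈ Icc 0 T, 0 ≤ deriv (fun z => v z t) x + 1 / b)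
    {x₀ t₀ : ℝ} (hx₀ : x₀ ∈ Icc 0 b) (ht₀ : t₀ ∈ Icc 0 T)
    (hmax : IsMaxOn (fun p : ℝ × ℝ => v p.1 p.2) (Icc 0 b ×ˢ Icc 0 T) (x₀, t₀)) :
    v x₀ t₀ ≤ max 1 (srcBound σ a r q T b / q) := by
  by_cases hint : x₀ ∈ Ioo 0 b ∧ t₀ ∈ Ioc 0 T
  · have h := (hsol.mul_le_srcF_of_isMaxOn hb.le hε hgrad hint.1 hint.2 hmax).trans
      (srcF_le_srcBound hr hq.le hb hx₀ ht₀.2)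
    exact le_max_of_le_right ((le_div_iff₀ hq).2 (by linarith))
  · exact le_max_of_le_left (le_of_abs_le (hsol.abs_le_one_of_not_interior hb hε hx₀ ht₀ hint))

lemma neg_one_le_of_isMinOn (hsol : IsClassicalSolutionV σ a r q T K b ε v) (hr : 0 ≤ r)
    (hq : 0 < q) (hb : 0 < b) (hε : 0 < ε)
    (hgrad : ∀ x ∈ Icc 0 b, ∀ t ∈ Icc 0 T, 0 ≤ deriv (fun z => v z t) x + 1 / b)
    {x₀ t₀ : ℝ} (hx₀ : x₀ ∈ Icc 0 b) (ht₀ : t₀ ∈ Icc 0 T)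
    (hmin : IsMinOn (fun p : ℝ × ℝ => v p.1 p.2) (Icc 0 b ×ˢ Icc 0 T) (x₀, t₀)) :
    -1 ≤ v x₀ t₀ := by
  by_cases hint : x₀ ∈ Ioo 0 b ∧ t₀ ∈ Ioc 0 T
  · have h := (srcF_nonneg t₀ hr hq.le hb.le hx₀.1).trans
      (hsol.srcF_le_mul_of_isMinOn hb.le hε hgrad hint.1 hint.2 hmin)
    linarith [nonneg_of_mul_nonneg_right h hq]
  · exact neg_le_of_abs_le (hsol.abs_le_one_of_not_interior hb hε hx₀ ht₀ hint)

end IsClassicalSolutionV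

theorem stmt_8_general (σ a r q T K b : ℝ)
    (hr : 0 < r) (hq : 0 < q)
    (hK : 0 < K) (hb : K < b) :
    ∃ C : ℝ, 0 < C ∧ ∀ ε : ℝ, 0 < ε → ε < 1 → ε < min K (b - K) →
      ∀ v : ℝ → ℝ → ℝ, IsClassicalSolutionV σ a r q T K b ε v →
        (∀ x ∈ Icc (0:ℝ) b, ∀ t ∈ Icc (0:ℝ) T,
          0 ≤ deriv (fun z => v z t) x + 1 / b) →
        ∀ x ∈ Icc (0:ℝ) b, ∀ t ∈ Icc (0:ℝ) T, |v x t| ≤ C := by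
  have hb₀ : 0 < b := hK.trans hb
  refine ⟨max 1 (srcBound σ a r q T b / q), lt_max_of_lt_left one_pos, ?_⟩
  intro ε hε _ _ v hsol hgrad x hx t ht
  have hcompact : IsCompact (Icc 0 b ×ˢ Icc 0 T) := isCompact_Icc.prod isCompact_Icc
  obtain ⟨⟨x₁, t₁⟩, ⟨hx₁, ht₁⟩, hmax⟩ := hcompact.exists_isMaxOn ⟨(x, t), hx, ht⟩ hsol.1
  obtain ⟨⟨x₂, t₂⟩, ⟨hx₂, ht₂⟩, hmin⟩ := hcompact.exists_isMinOn ⟨(x, t), hx, ht⟩ hsol.1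
  have hupper : v x t ≤ v x₁ t₁ := hmax (mk_mem_prod hx ht)
  have hlower : v x₂ t₂ ≤ v x t := hmin (mk_mem_prod hx ht)
  rw [abs_le]
  constructor
  · linarith [hsol.neg_one_le_of_isMinOn hr.le hq hb₀ hε hgrad hx₂ ht₂ hmin,
      le_max_left 1 (srcBound σ a r q T b / q)]
  · exact hupper.trans (hsol.le_max_of_isMaxOn hr.le hq hb₀ hε hgrad hx₁ ht₁ hmax)

/-- uniform L^∞ bound |v(x,t)| ≤ C on [0,b]×[0,T], with C
independent of ε and of v. -/
theorem stmt_8 (σ a r q T K b : ℝ)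
    (hσ : 0 < σ) (ha : 0 < a) (hr : 0 < r) (hq : 0 < q) (hT : 0 < T)
    (hK : 0 < K) (hb : K < b) :
    ∃ C : ℝ, 0 < C ∧ ∀ ε : ℝ, 0 < ε → ε < 1 → ε < min K (b - K) →
      ∀ v : ℝ → ℝ → ℝ, IsClassicalSolutionV σ a r q T K b ε v →
        (∀ x ∈ Icc (0:ℝ) b, ∀ t ∈ Icc (0:ℝ) T,
          0 ≤ deriv (fun z => v z t) x + 1 / b) →
        ∀ x ∈ Icc (0:ℝ) b, ∀ t ∈ Icc (0:ℝ) T, |v x t| ≤ C :=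
  stmt_8_general σ a r q T K b hr hq hK hb
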